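/- Let 𝒫 be a partition of C into nonempty blocks and let P, Q be two distinct blocks of 𝒫. Let 𝒫' be the partition obtained from 𝒫 by replacing the two blocks P and Q with the single block P ∪ Q. Then Ω(𝒫) − Ω(𝒫') = Δ(P,Q), i.e., merging the two blocks changes the energy by exactly the merge gain Δ(P,Q) = −(|P|·|Q|/(|P|+|Q|))·‖F_P − F_Q‖² + λ · Σ_{{p,q}∈ℰ, p∈P, q∈Q} w_{p,q}. -/

import Mathlib

open Finset

variable {C E : Type*}

noncomputable def mean [NormedAddCommGroup E] [InnerProductSpace ℝ E]
    (f : C → E) (U : Finset C) : E :=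
  (U.card : ℝ)⁻¹ • ∑ p ∈ U, f p

noncomputable def cost [NormedAddCommGroup E] [InnerProductSpace ℝ E]
    (f : C → E) (U : Finset C) : ℝ :=
  ∑ p ∈ U, ‖f p - mean f U‖ ^ 2

def IsPartition [Fintype C] (Prt : Finset (Finset C)) : Prop :=
  (∀ U ∈ Prt, U.Nonempty) ∧ (∀ U ∈ Prt, ∀ V ∈ Prt, U ≠ V → Disjoint U V) ∧
    ∀ p : C, ∃ U ∈ Prt, p ∈ U

open scoped Classical in
/-- Sum of the weights of the edges of `ℰ` whose endpoints lie in different blocks of `Prt`. -/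
noncomputable def crossSum (ℰ : Finset (Sym2 C)) (w : Sym2 C → ℝ)
    (Prt : Finset (Finset C)) : ℝ :=
  ∑ e ∈ ℰ.filter (fun e => ¬ ∃ U ∈ Prt, ∀ p ∈ e, p ∈ U), w e

noncomputable def energy [Fintype C] [NormedAddCommGroup E] [InnerProductSpace ℝ E]
    (f : C → E) (ℰ : Finset (Sym2 C)) (w : Sym2 C → ℝ) (lam : ℝ)
    (Prt : Finset (Finset C)) : ℝ :=
  ∑ U ∈ Prt, cost f U + lam * crossSum ℰ w Prt

open scoped Classical in
/-- Sum of the weights of the edges of `ℰ` joining `P` and `Q`. -/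
noncomputable def joinSum (ℰ : Finset (Sym2 C)) (w : Sym2 C → ℝ) (P Q : Finset C) : ℝ :=
  ∑ e ∈ ℰ.filter (fun e => ∃ p ∈ P, ∃ q ∈ Q, e = s(p, q)), w e

noncomputable def mergeGain [NormedAddCommGroup E] [InnerProductSpace ℝ E]
    (f : C → E) (ℰ : Finset (Sym2 C)) (w : Sym2 C → ℝ) (lam : ℝ)
    (P Q : Finset C) : ℝ :=
  -(((P.card : ℝ) * (Q.card : ℝ)) / ((P.card : ℝ) + (Q.card : ℝ))) *
      ‖mean f P - mean f Q‖ ^ 2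
    + lam * joinSum ℰ w P Q

/-!
By the König–Huygens decomposition, the cost of `P ∪ Q` exceeds `cost P + cost Q` by the
between-cluster term `|P| |Q| / (|P| + |Q|) ‖F_P - F_Q‖²`. On the cut side, an edge lies inside
a block of the merged partition iff it lay inside a block before or joins `P` and `Q`; as blocks
are disjoint, the two cases exclude each other, so the cut loses exactly the edges between `P`
and `Q`.
-/

section Cost

variable [NormedAddCommGroup E] [InnerProductSpace ℝ E]

theorem sum_eq_card_smul_mean (f : C → E) {U : Finset C} (hU : U.Nonempty) :
    ∑ p ∈ U, f p = (U.card : ℝ) • mean f U := by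
  rw [mean, smul_smul, mul_inv_cancel₀ (by exact_mod_cast hU.card_pos.ne'), one_smul]

theorem mean_union [DecidableEq C] (f : C → E) {P Q : Finset C} (hP : P.Nonempty)
    (hQ : Q.Nonempty) (hPQ : Disjoint P Q) :
    mean f (P ∪ Q) =
      ((P.card : ℝ) + Q.card)⁻¹ • ((P.card : ℝ) • mean f P + (Q.card : ℝ) • mean f Q) := by
  rw [mean, sum_union hPQ, card_union_of_disjoint hPQ, Nat.cast_add,
    sum_eq_card_smul_mean f hP, sum_eq_card_smul_mean f hQ]

/-- König–Huygens: the within-cluster cost is the second moment minus that of the mean. -/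
theorem cost_eq_sum_norm_sq_sub (f : C → E) (U : Finset C) :
    cost f U = ∑ p ∈ U, ‖f p‖ ^ 2 - U.card * ‖mean f U‖ ^ 2 := by
  rcases U.eq_empty_or_nonempty with rfl | hU
  · simp [cost]
  · simp only [cost, norm_sub_sq_real, sum_add_distrib, sum_sub_distrib, sum_const,
      ← mul_sum, ← sum_inner, sum_eq_card_smul_mean f hU, real_inner_smul_left,
      real_inner_self_eq_norm_sq, nsmul_eq_mul]
    ring

/-- Lagrange's identity for two weighted points. -/
theorem mul_norm_sq_add_mul_norm_sq {a b : ℝ} (hab : a + b ≠ 0) (u v : E) :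
    a * ‖u‖ ^ 2 + b * ‖v‖ ^ 2 =
      (a + b) * ‖(a + b)⁻¹ • (a • u + b • v)‖ ^ 2 + a * b / (a + b) * ‖u - v‖ ^ 2 := by
  rw [norm_smul, mul_pow, norm_inv, Real.norm_eq_abs, inv_pow, sq_abs, norm_sub_sq_real,
    ← real_inner_self_eq_norm_sq (a • u + b • v)]
  simp only [inner_add_add_self, real_inner_smul_left, real_inner_smul_right,
    real_inner_self_eq_norm_sq, real_inner_comm u v, norm_smul, mul_pow, Real.norm_eq_abs, sq_abs]
  field_simp
  ring

theorem cost_union [DecidableEq C] (f : C → E) {P Q : Finset C} (hP : P.Nonempty)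
    (hQ : Q.Nonempty) (hPQ : Disjoint P Q) :
    cost f (P ∪ Q) = cost f P + cost f Q
      + (P.card : ℝ) * Q.card / (P.card + Q.card) * ‖mean f P - mean f Q‖ ^ 2 := by
  have hcard : ((P.card : ℝ) + Q.card) ≠ 0 := by positivity
  have := mul_norm_sq_add_mul_norm_sq hcard (mean f P) (mean f Q)
  rw [cost_eq_sum_norm_sq_sub, cost_eq_sum_norm_sq_sub, cost_eq_sum_norm_sq_sub, sum_union hPQ,
    card_union_of_disjoint hPQ, Nat.cast_add, mean_union f hP hQ hPQ]
  linarith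

end Cost

theorem exists_mem_mem_sym2_mk_eq_iff {P Q : Finset C} {x y : C} :
    (∃ p ∈ P, ∃ q ∈ Q, s(x, y) = s(p, q)) ↔ x ∈ P ∧ y ∈ Q ∨ y ∈ P ∧ x ∈ Q := by
  simp only [Sym2.eq_iff]
  aesop

section Merge

variable [DecidableEq C] {Prt : Finset (Finset C)} {P Q : Finset C}

theorem sum_insert_union_erase_erase {M : Type*} [AddCommGroup M] (g : Finset C → M)
    (hP : P ∈ Prt) (hQ : Q ∈ Prt) (hPQ : P ≠ Q) (hPQ' : P ∪ Q ∉ Prt) :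
    ∑ U ∈ insert (P ∪ Q) ((Prt.erase P).erase Q), g U =
      ∑ U ∈ Prt, g U - g P - g Q + g (P ∪ Q) := by
  rw [sum_insert fun h ↦ hPQ' (mem_of_mem_erase (mem_of_mem_erase h)),
    ← sum_erase_add _ _ hP, ← sum_erase_add _ _ (mem_erase.mpr ⟨hPQ.symm, hQ⟩)]
  abel

theorem sym2_forall_mem_union_iff {e : Sym2 C} :
    (∀ p ∈ e, p ∈ P ∪ Q) ↔
      (∀ p ∈ e, p ∈ P) ∨ (∀ p ∈ e, p ∈ Q) ∨ ∃ p ∈ P, ∃ q ∈ Q, e = s(p, q) := by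
  induction e using Sym2.ind with
  | _ x y =>
    simp only [Sym2.mem_iff, forall_eq_or_imp, forall_eq, mem_union, exists_mem_mem_sym2_mk_eq_iff]
    tauto

theorem exists_block_insert_union_erase_erase_iff (hP : P ∈ Prt) (hQ : Q ∈ Prt)
    {e : Sym2 C} :
    (∃ U ∈ insert (P ∪ Q) ((Prt.erase P).erase Q), ∀ p ∈ e, p ∈ U) ↔
      (∃ U ∈ Prt, ∀ p ∈ e, p ∈ U) ∨ ∃ p ∈ P, ∃ q ∈ Q, e = s(p, q) := by
  constructor
  · rintro ⟨U, hU, he⟩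
    rcases mem_insert.mp hU with rfl | hU
    · rcases sym2_forall_mem_union_iff.mp he with heP | heQ | hjoin
      · exact Or.inl ⟨P, hP, heP⟩
      · exact Or.inl ⟨Q, hQ, heQ⟩
      · exact Or.inr hjoin
    · exact Or.inl ⟨U, mem_of_mem_erase (mem_of_mem_erase hU), he⟩
  · rintro (⟨U, hU, he⟩ | hjoin)
    · by_cases hU' : U = P ∨ U = Q
      · refine ⟨P ∪ Q, mem_insert_self _ _, fun p hp ↦ ?_⟩
        rcases hU' with rfl | rfl
        exacts [mem_union_left _ (he p hp), mem_union_right _ (he p hp)]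
      · push Not at hU'
        exact ⟨U, mem_insert_of_mem (mem_erase.mpr ⟨hU'.2, mem_erase.mpr ⟨hU'.1, hU⟩⟩), he⟩
    · exact ⟨P ∪ Q, mem_insert_self _ _, sym2_forall_mem_union_iff.mpr (Or.inr (Or.inr hjoin))⟩

end Merge

namespace IsPartition

variable [Fintype C] {Prt : Finset (Finset C)} {P Q : Finset C}

theorem eq_of_mem_of_mem (h : IsPartition Prt) {U V : Finset C} {x : C} (hU : U ∈ Prt)
    (hV : V ∈ Prt) (hxU : x ∈ U) (hxV : x ∈ V) : U = V := by
  by_contra hUV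
  exact disjoint_left.mp (h.2.1 U hU V hV hUV) hxU hxV

theorem union_notMem [DecidableEq C] (h : IsPartition Prt) (hP : P ∈ Prt) (hQ : Q ∈ Prt)
    (hPQ : P ≠ Q) : P ∪ Q ∉ Prt := by
  intro hPQ'
  obtain ⟨p, hp⟩ := h.1 P hP
  obtain ⟨q, hq⟩ := h.1 Q hQ
  exact hPQ <| (h.eq_of_mem_of_mem hPQ' hP (mem_union_left _ hp) hp).symm.trans
    (h.eq_of_mem_of_mem hPQ' hQ (mem_union_right _ hq) hq)

theorem not_exists_block_of_eq_mk (h : IsPartition Prt) (hP : P ∈ Prt) (hQ : Q ∈ Prt)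
    (hPQ : P ≠ Q) {e : Sym2 C} (hjoin : ∃ p ∈ P, ∃ q ∈ Q, e = s(p, q)) :
    ¬ ∃ U ∈ Prt, ∀ x ∈ e, x ∈ U := by
  obtain ⟨p, hp, q, hq, rfl⟩ := hjoin
  rintro ⟨U, hU, he⟩
  exact hPQ <| (h.eq_of_mem_of_mem hP hU hp (he p (Sym2.mem_mk_left p q))).trans
    (h.eq_of_mem_of_mem hU hQ (he q (Sym2.mem_mk_right p q)) hq)

theorem crossSum_eq_crossSum_merge_add_joinSum [DecidableEq C] (h : IsPartition Prt)
    (ℰ : Finset (Sym2 C)) (w : Sym2 C → ℝ) (hP : P ∈ Prt) (hQ : Q ∈ Prt) (hPQ : P ≠ Q) :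
    crossSum ℰ w Prt =
      crossSum ℰ w (insert (P ∪ Q) ((Prt.erase P).erase Q)) + joinSum ℰ w P Q := by
  rw [crossSum, crossSum, joinSum, sum_filter, sum_filter, sum_filter, ← sum_add_distrib]
  refine sum_congr rfl fun e _ ↦ ?_
  have hmerge := exists_block_insert_union_erase_erase_iff hP hQ (e := e)
  have hjoin := h.not_exists_block_of_eq_mk hP hQ hPQ (e := e)
  by_cases hJ : ∃ p ∈ P, ∃ q ∈ Q, e = s(p, q)
  · rw [if_pos (hjoin hJ), if_neg (not_not_intro (hmerge.mpr (Or.inr hJ))), if_pos hJ, zero_add]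
  · simp only [hmerge, hJ, or_false, if_false, add_zero]
    congr

end IsPartition

theorem merge_energy_gain_general [Fintype C] [DecidableEq C]
    [NormedAddCommGroup E] [InnerProductSpace ℝ E]
    (f : C → E) (ℰ : Finset (Sym2 C))
    (w : Sym2 C → ℝ) (lam : ℝ)
    (Prt : Finset (Finset C)) (hPrt : IsPartition Prt)
    (P Q : Finset C) (hP : P ∈ Prt) (hQ : Q ∈ Prt) (hPQ : P ≠ Q) :
    energy f ℰ w lam Prt - energy f ℰ w lam (insert (P ∪ Q) ((Prt.erase P).erase Q))
      = mergeGain f ℰ w lam P Q := by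
  rw [energy, energy, mergeGain,
    sum_insert_union_erase_erase _ hP hQ hPQ (hPrt.union_notMem hP hQ hPQ),
    cost_union f (hPrt.1 P hP) (hPrt.1 Q hQ) (hPrt.2.1 P hP Q hQ hPQ),
    hPrt.crossSum_eq_crossSum_merge_add_joinSum ℰ w hP hQ hPQ]
  ring

/-- Merging two distinct blocks `P, Q` of a partition into `P ∪ Q`
changes the energy by exactly the merge gain `Δ(P,Q)`. -/
theorem merge_energy_gain [Fintype C] [DecidableEq C]
    [NormedAddCommGroup E] [InnerProductSpace ℝ E]
    (f : C → E) (ℰ : Finset (Sym2 C)) (hℰ : ∀ e ∈ ℰ, ¬ e.IsDiag)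
    (w : Sym2 C → ℝ) (hw : ∀ e ∈ ℰ, 0 < w e) (lam : ℝ) (hlam : 0 < lam)
    (Prt : Finset (Finset C)) (hPrt : IsPartition Prt)
    (P Q : Finset C) (hP : P ∈ Prt) (hQ : Q ∈ Prt) (hPQ : P ≠ Q) :
    energy f ℰ w lam Prt - energy f ℰ w lam (insert (P ∪ Q) ((Prt.erase P).erase Q))
      = mergeGain f ℰ w lam P Q :=
  merge_energy_gain_general f ℰ w lam Prt hPrt P Q hP hQ hPQ
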